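/- arXiv:2109.14494 — 3 statements merged into one kernel-verified Lean document; each statement's English description precedes it below -/
import Mathlib

section
/- Let ρ ∈ 𝓗^d ⊗ 𝓗^d be Hermitian and let t ≥ 2 be an integer. For every L feasible for the order-t program there exists another feasible L̃ for the order-t program with L̃(1) = L(1) that additionally satisfies L̃(x^α x̄^{α'} y^β ȳ^{β'}) = 0 for all monomials with |α| ≠ |α'| or |β| ≠ |β'|. Consequently, restricting the optimization defining ξ_t^sep(ρ) to linear functionals satisfying this vanishing condition does not change its value. -/
open MvPolynomial ComplexOrder
open scoped ENNReal

/-- Variables of `ℂ[x,x̄,y,ȳ]` for the bipartite setting: `x_i, x̄_i, y_j, ȳ_j`. -/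
abbrev SVar (d : ℕ) := (Fin d ⊕ Fin d) ⊕ (Fin d ⊕ Fin d)

/-- The polynomial ring `ℂ[x,x̄,y,ȳ]`. -/
abbrev SPoly (d : ℕ) := MvPolynomial (SVar d) ℂ

def xv {d : ℕ} (i : Fin d) : SVar d := Sum.inl (Sum.inl i)
def xbv {d : ℕ} (i : Fin d) : SVar d := Sum.inl (Sum.inr i)
def yv {d : ℕ} (j : Fin d) : SVar d := Sum.inr (Sum.inl j)
def ybv {d : ℕ} (j : Fin d) : SVar d := Sum.inr (Sum.inr j)

/-- The conjugate polynomial: conjugate the coefficients and exchange each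
variable with its barred version. -/
noncomputable def sconj {d : ℕ} (p : SPoly d) : SPoly d :=
  rename (Sum.map (Sum.elim Sum.inr Sum.inl) (Sum.elim Sum.inr Sum.inl))
    (map (starRingEnd ℂ) p)

/-- The matrix `xx* ⊗ yy*`, with rows and columns indexed by pairs `(i,j)`. -/
noncomputable def pureState (d : ℕ) (x y : Fin d → ℂ) :
    Matrix (Fin d × Fin d) (Fin d × Fin d) ℂ :=
  Matrix.of fun p q => x p.1 * starRingEnd ℂ (x q.1) * (y p.2 * starRingEnd ℂ (y q.2))

/-- The cone of (unnormalized) separable states. -/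
def SEP (d : ℕ) : Set (Matrix (Fin d × Fin d) (Fin d × Fin d) ℂ) :=
  { ρ | ∃ (r : ℕ) (c : Fin r → ℝ) (x y : Fin r → (Fin d → ℂ)),
      (∀ ℓ, 0 ≤ c ℓ) ∧ (∀ ℓ, ∑ i, Complex.normSq (x ℓ i) = 1) ∧
      (∀ ℓ, ∑ i, Complex.normSq (y ℓ i) = 1) ∧
      ρ = ∑ ℓ, (c ℓ : ℂ) • pureState d (x ℓ) (y ℓ) }

/-- Largest diagonal entry `ρ_max` of `ρ`. -/
noncomputable def rhoMax (d : ℕ) (ρ : Matrix (Fin d × Fin d) (Fin d × Fin d) ℂ) : ℝ :=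
  ⨆ p : Fin d × Fin d, (ρ p p).re

/-- The degree-four monomial `x_i x̄_{i'} y_j ȳ_{j'}`. -/
noncomputable def momPoly {d : ℕ} (i i' j j' : Fin d) : SPoly d :=
  X (xv i) * X (xbv i') * X (yv j) * X (ybv j')

/-- The localizing polynomials `S_ρ`. -/
noncomputable def Sloc (d : ℕ) (ρ : Matrix (Fin d × Fin d) (Fin d × Fin d) ℂ) :
    Set (SPoly d) :=
  (Set.range fun i : Fin d =>
    (C ((Real.sqrt (rhoMax d ρ) : ℂ)) : SPoly d) - X (xv i) * X (xbv i)) ∪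
  (Set.range fun j : Fin d =>
    (C ((Real.sqrt (rhoMax d ρ) : ℂ)) : SPoly d) - X (yv j) * X (ybv j))

/-- The truncated quadratic module `𝓜(S)_{2t}`. -/
def QMt (d : ℕ) (S : Set (SPoly d)) (t : ℕ) : Set (SPoly d) :=
  { q | ∃ (N : ℕ) (c : Fin N → ℝ) (g p : Fin N → SPoly d),
      (∀ s, 0 ≤ c s) ∧ (∀ s, g s ∈ S ∪ {1}) ∧
      (∀ s, (g s * (p s * sconj (p s))).totalDegree ≤ 2 * t) ∧
      q = ∑ s, C (c s : ℂ) * (g s * (p s * sconj (p s))) }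

/-- The (untruncated) quadratic module `𝓜(S)`. -/
def QMf (d : ℕ) (S : Set (SPoly d)) : Set (SPoly d) :=
  { q | ∃ (N : ℕ) (c : Fin N → ℝ) (g p : Fin N → SPoly d),
      (∀ s, 0 ≤ c s) ∧ (∀ s, g s ∈ S ∪ {1}) ∧
      q = ∑ s, C (c s : ℂ) * (g s * (p s * sconj (p s))) }

/-- Feasibility for the order-`t` program defining `ξ_t^sep(ρ)`. -/
def IsFeas (d t : ℕ) (ρ : Matrix (Fin d × Fin d) (Fin d × Fin d) ℂ)
    (L : SPoly d →ₗ[ℂ] ℂ) : Prop :=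
  (∀ p, L (sconj p) = star (L p)) ∧
  (∀ i i' j j', L (momPoly i i' j j') = ρ (i, j) (i', j')) ∧
  (∀ q ∈ QMt d (Sloc d ρ) t, 0 ≤ L q) ∧
  (∀ q : Fin d → Fin d → SPoly d, (∀ i j, (q i j).totalDegree ≤ t - 2) →
    0 ≤ ∑ i, ∑ j, ∑ i', ∑ j',
      L ((C (ρ (i, j) (i', j')) - momPoly i i' j j') * (q i j * sconj (q i' j'))))

/-- Feasibility for the order-`∞` program. -/
def IsFeasInf (d : ℕ) (ρ : Matrix (Fin d × Fin d) (Fin d × Fin d) ℂ)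
    (L : SPoly d →ₗ[ℂ] ℂ) : Prop :=
  (∀ p, L (sconj p) = star (L p)) ∧
  (∀ i i' j j', L (momPoly i i' j j') = ρ (i, j) (i', j')) ∧
  (∀ q ∈ QMf d (Sloc d ρ), 0 ≤ L q) ∧
  (∀ q : Fin d → Fin d → SPoly d,
    0 ≤ ∑ i, ∑ j, ∑ i', ∑ j',
      L ((C (ρ (i, j) (i', j')) - momPoly i i' j j') * (q i j * sconj (q i' j'))))

/-- `ξ_t^sep(ρ)`. -/
noncomputable def xiSep (d t : ℕ) (ρ : Matrix (Fin d × Fin d) (Fin d × Fin d) ℂ) : ℝ≥0∞ :=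
  sInf { e | ∃ L : SPoly d →ₗ[ℂ] ℂ, IsFeas d t ρ L ∧ e = ENNReal.ofReal (L 1).re }

/-- `ξ_∞^sep(ρ)`. -/
noncomputable def xiSepInf (d : ℕ) (ρ : Matrix (Fin d × Fin d) (Fin d × Fin d) ℂ) : ℝ≥0∞ :=
  sInf { e | ∃ L : SPoly d →ₗ[ℂ] ℂ, IsFeasInf d ρ L ∧ e = ENNReal.ofReal (L 1).re }

/-- `L` vanishes on all unbalanced monomials `x^α x̄^{α'} y^β ȳ^{β'}` (those
with `|α| ≠ |α'|` or `|β| ≠ |β'|`). -/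
def BalancedL (d : ℕ) (L : SPoly d →ₗ[ℂ] ℂ) : Prop :=
  ∀ al al' be be' : Fin d → ℕ,
    ((∑ i, al i) ≠ (∑ i, al' i) ∨ (∑ j, be j) ≠ (∑ j, be' j)) →
    L ((∏ i, X (xv i) ^ al i) * (∏ i, X (xbv i) ^ al' i) *
        (∏ j, X (yv j) ^ be j) * (∏ j, X (ybv j) ^ be' j)) = 0

/-!
For a weight `w` on the variables, the circle acts on polynomials by `X i ↦ u ^ w i • X i`,
multiplying the monomial `m` by `u ^ weight w m`. Averaging this action over the `N`-th roots
of unity, with `N` larger than every weight occurring in a polynomial `p`, gives `N` times the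
weight-zero component of `p`. For the weight `(1, -1, 0, 0)` on `(x, x̄, y, ȳ)`, and for
`(0, 0, 1, -1)`, every constraint of the order-`t` program is invariant under the action: `S_ρ`
and the moment monomials `x_i x̄_i' y_j ȳ_j'` have weight zero, the action commutes with
conjugation, and it does not increase degrees. So the positivity constraints pass from `L` to
`L` composed with the weight-zero projection. Doing this for both weights yields `L̃`.
-/

theorem IsPrimitiveRoot.sum_range_zpow_pow {K : Type*} [Field K] {ζ : K} {N : ℕ}
    (hζ : IsPrimitiveRoot ζ N) {k : ℤ} (hk : |k| < N) :
    ∑ a ∈ Finset.range N, (ζ ^ k) ^ a = if k = 0 then (N : K) else 0 := by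
  split_ifs with h
  · simp [h]
  · have hne : ζ ^ k ≠ 1 := by
      rw [Ne, hζ.zpow_eq_one_iff_dvd]
      exact fun hdvd => h (Int.eq_zero_of_abs_lt_dvd hdvd hk)
    rw [geom_sum_eq hne, ← zpow_natCast, ← zpow_mul, mul_comm, zpow_mul, zpow_natCast,
      hζ.pow_eq_one, one_zpow, sub_self, zero_div]

theorem Circle.isPrimitiveRoot_exp (N : ℕ) (hN : N ≠ 0) :
    IsPrimitiveRoot (Circle.exp (2 * Real.pi / N) : ℂ) N := by
  convert Complex.isPrimitiveRoot_exp N hN using 1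
  rw [Circle.coe_exp]
  push_cast
  ring_nf

theorem Complex.nonneg_of_natCast_mul_nonneg {z : ℂ} {N : ℕ} (hN : N ≠ 0)
    (h : 0 ≤ (N : ℂ) * z) : 0 ≤ z := by
  have hreal : 0 ≤ (N : ℝ) • z := by simpa [Complex.real_smul] using h
  have := smul_nonneg (inv_nonneg.2 (Nat.cast_nonneg N : (0 : ℝ) ≤ N)) hreal
  rwa [smul_smul, inv_mul_cancel₀ (by exact_mod_cast hN), one_smul] at this

namespace MvPolynomial

variable {σ : Type*} (w : σ → ℤ)

noncomputable def circleAction (u : Circle) : MvPolynomial σ ℂ →ₐ[ℂ] MvPolynomial σ ℂ :=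
  aeval fun i => C ((u ^ w i : Circle) : ℂ) * X i

theorem prod_zpow_pow_eq_zpow_weight (u : Circle) (m : σ →₀ ℕ) :
    (m.prod fun i k => (u ^ w i) ^ k) = u ^ Finsupp.weight w m := by
  rw [Finsupp.weight_apply, Finsupp.sum, Finsupp.prod]
  simp only [← zpow_natCast, ← zpow_mul]
  have := map_prod (zpowersHom Circle u) (fun i => Multiplicative.ofAdd (w i * (m i : ℤ)))
    m.support
  rw [← ofAdd_sum] at this
  simpa only [zpowersHom_apply, toAdd_ofAdd, nsmul_eq_mul, mul_comm] using this.symm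

theorem circleAction_monomial (u : Circle) (m : σ →₀ ℕ) (c : ℂ) :
    circleAction w u (monomial m c) =
      monomial m (((u ^ Finsupp.weight w m : Circle) : ℂ) * c) := by
  have hcoe : ((m.prod fun i k => (u ^ w i) ^ k : Circle) : ℂ) =
      m.prod fun i k => ((u ^ w i : Circle) : ℂ) ^ k :=
    map_finsuppProd Circle.coeHom _ _
  rw [circleAction, aeval_monomial, ← prod_zpow_pow_eq_zpow_weight, hcoe]
  simp only [mul_pow, Finsupp.prod_mul, ← map_pow, ← map_finsuppProd, algebraMap_eq,
    monomial_eq, map_mul]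
  ring

theorem coeff_circleAction (u : Circle) (p : MvPolynomial σ ℂ) (m : σ →₀ ℕ) :
    coeff m (circleAction w u p) = (u ^ Finsupp.weight w m : Circle) * coeff m p := by
  classical
  induction p using MvPolynomial.induction_on' with
  | monomial m' c =>
    rw [circleAction_monomial, coeff_monomial, coeff_monomial]
    split_ifs with h
    · rw [h]
    · rw [mul_zero]
  | add p q hp hq => rw [map_add, coeff_add, hp, hq, coeff_add, mul_add]

@[simp]
theorem circleAction_C (u : Circle) (c : ℂ) : circleAction w u (C c) = C c :=
  aeval_C _ c

theorem totalDegree_circleAction_le (u : Circle) (p : MvPolynomial σ ℂ) :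
    (circleAction w u p).totalDegree ≤ p.totalDegree :=
  totalDegree_le_of_support_subset fun m hm => by
    rw [mem_support_iff, coeff_circleAction] at hm
    exact mem_support_iff.2 (right_ne_zero_of_mul hm)

variable {w}

theorem IsWeightedHomogeneous.circleAction_eq {p : MvPolynomial σ ℂ}
    (hp : IsWeightedHomogeneous w p 0) (u : Circle) : circleAction w u p = p := by
  ext m
  rw [coeff_circleAction]
  by_cases h : coeff m p = 0
  · rw [h, mul_zero]
  · rw [hp h, zpow_zero, Circle.coe_one, one_mul]

variable (w)

theorem sum_range_circleAction_pow {N : ℕ} {ζ : Circle} (hζ : IsPrimitiveRoot (ζ : ℂ) N)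
    {p : MvPolynomial σ ℂ} (hp : ∀ m ∈ p.support, |Finsupp.weight w m| < N) :
    ∑ a ∈ Finset.range N, circleAction w (ζ ^ a) p =
      (N : ℂ) • weightedHomogeneousComponent w 0 p := by
  classical
  ext m
  simp only [coeff_sum, coeff_circleAction, coeff_smul, coeff_weightedHomogeneousComponent,
    ← Finset.sum_mul, smul_eq_mul]
  by_cases hm : m ∈ p.support
  · have hpow : ∀ a : ℕ, (((ζ ^ a) ^ Finsupp.weight w m : Circle) : ℂ) =
        ((ζ : ℂ) ^ Finsupp.weight w m) ^ a := fun a => by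
      rw [Circle.coe_zpow, Circle.coe_pow, ← zpow_natCast, ← zpow_mul, mul_comm, zpow_mul,
        zpow_natCast]
    simp_rw [hpow, hζ.sum_range_zpow_pow (hp m hm)]
    split_ifs <;> ring
  · rw [notMem_support_iff.1 hm]
    split_ifs <;> ring

theorem nonneg_apply_weightedHomogeneousComponent_zero {T : Set (MvPolynomial σ ℂ)}
    (hT : ∀ u, Set.MapsTo (circleAction w u) T T) {L : MvPolynomial σ ℂ →ₗ[ℂ] ℂ}
    (hL : ∀ q ∈ T, 0 ≤ L q) {q : MvPolynomial σ ℂ} (hq : q ∈ T) :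
    0 ≤ L (weightedHomogeneousComponent w 0 q) := by
  set N := q.support.sup (fun m => (Finsupp.weight w m).natAbs) + 1
  have hN : N ≠ 0 := Nat.succ_ne_zero _
  have hbound : ∀ m ∈ q.support, |Finsupp.weight w m| < N := fun m hm => by
    have := Finset.le_sup (f := fun m => (Finsupp.weight w m).natAbs) hm
    rw [Int.abs_eq_natAbs]
    exact_mod_cast Nat.lt_succ_of_le this
  have havg := congrArg L (sum_range_circleAction_pow w (Circle.isPrimitiveRoot_exp N hN) hbound)
  rw [map_sum, map_smul, smul_eq_mul] at havg
  refine Complex.nonneg_of_natCast_mul_nonneg hN ?_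
  rw [← havg]
  exact Finset.sum_nonneg fun a _ => hL _ (hT _ hq)

end MvPolynomial

def swapVar {d : ℕ} : SVar d → SVar d :=
  Sum.map (Sum.elim Sum.inr Sum.inl) (Sum.elim Sum.inr Sum.inl)

theorem swapVar_involutive {d : ℕ} : Function.Involutive (swapVar (d := d)) := by
  rintro ((i | i) | (j | j)) <;> rfl

theorem coeff_sconj {d : ℕ} (p : SPoly d) (m : SVar d →₀ ℕ) :
    coeff m (sconj p) = starRingEnd ℂ (coeff (m.mapDomain swapVar) p) := by
  have hm : (m.mapDomain swapVar).mapDomain swapVar = m := by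
    rw [← Finsupp.mapDomain_comp, swapVar_involutive.comp_self, Finsupp.mapDomain_id]
  conv_lhs => rw [← hm]
  exact (coeff_rename_mapDomain _ swapVar_involutive.injective _ _).trans (coeff_map _ _ _)

section OddWeight

variable {d : ℕ} {w : SVar d → ℤ}

theorem weight_mapDomain_swapVar (hw : ∀ v, w (swapVar v) = -w v) (m : SVar d →₀ ℕ) :
    Finsupp.weight w (m.mapDomain swapVar) = -Finsupp.weight w m := by
  rw [Finsupp.weight_apply, Finsupp.weight_apply,
    Finsupp.sum_mapDomain_index (fun _ => zero_smul ℕ (w _)) (fun _ _ _ => add_smul _ _ _),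
    ← Finsupp.sum_neg]
  simp only [hw, smul_neg]

theorem weightedHomogeneousComponent_zero_sconj (hw : ∀ v, w (swapVar v) = -w v) (p : SPoly d) :
    weightedHomogeneousComponent w 0 (sconj p) = sconj (weightedHomogeneousComponent w 0 p) := by
  classical
  ext m
  rw [coeff_weightedHomogeneousComponent, coeff_sconj, coeff_sconj,
    coeff_weightedHomogeneousComponent]
  simp only [weight_mapDomain_swapVar hw, neg_eq_zero]
  split_ifs <;> simp

theorem sconj_circleAction (hw : ∀ v, w (swapVar v) = -w v) (u : Circle) (p : SPoly d) :
    sconj (circleAction w u p) = circleAction w u (sconj p) := by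
  ext m
  rw [coeff_sconj, coeff_circleAction, coeff_circleAction, coeff_sconj,
    weight_mapDomain_swapVar hw, map_mul, zpow_neg, Circle.coe_inv_eq_conj, Complex.conj_conj]

end OddWeight

noncomputable def sepLocalizer {d : ℕ} (ρ : Matrix (Fin d × Fin d) (Fin d × Fin d) ℂ)
    (q : Fin d → Fin d → SPoly d) : SPoly d :=
  ∑ i, ∑ j, ∑ i', ∑ j',
    (C (ρ (i, j) (i', j')) - momPoly i i' j j') * (q i j * sconj (q i' j'))

theorem map_sepLocalizer {d : ℕ} {ρ : Matrix (Fin d × Fin d) (Fin d × Fin d) ℂ}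
    (L : SPoly d →ₗ[ℂ] ℂ) (q : Fin d → Fin d → SPoly d) :
    L (sepLocalizer ρ q) = ∑ i, ∑ j, ∑ i', ∑ j',
      L ((C (ρ (i, j) (i', j')) - momPoly i i' j j') * (q i j * sconj (q i' j'))) := by
  simp only [sepLocalizer, map_sum]

def blockWeight {d : ℕ} (a b : ℤ) : SVar d → ℤ :=
  Sum.elim (Sum.elim (fun _ => a) (fun _ => -a)) (Sum.elim (fun _ => b) (fun _ => -b))

section BlockWeight

variable {d t : ℕ} {ρ : Matrix (Fin d × Fin d) (Fin d × Fin d) ℂ} (a b : ℤ)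

theorem blockWeight_swapVar (v : SVar d) : blockWeight a b (swapVar v) = -blockWeight a b v := by
  rcases v with ((i | i) | (j | j)) <;> simp [blockWeight, swapVar]

theorem isWeightedHomogeneous_blockWeight_momPoly (i i' j j' : Fin d) :
    IsWeightedHomogeneous (blockWeight a b) (momPoly i i' j j') 0 := by
  rw [momPoly]
  have hX := isWeightedHomogeneous_X ℂ (blockWeight (d := d) a b)
  convert (((hX (xv i)).mul (hX (xbv i'))).mul (hX (yv j))).mul (hX (ybv j')) using 1
  simp [blockWeight, xv, xbv, yv, ybv]

theorem isWeightedHomogeneous_blockWeight_of_mem_Sloc_union {g : SPoly d}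
    (hg : g ∈ Sloc d ρ ∪ {1}) :
    IsWeightedHomogeneous (blockWeight a b) g 0 := by
  have hXX : ∀ v : SVar d,
      IsWeightedHomogeneous (blockWeight a b) (X v * X (swapVar v) : SPoly d) 0 := fun v => by
    convert (isWeightedHomogeneous_X ℂ (blockWeight a b) v).mul
      (isWeightedHomogeneous_X ℂ (blockWeight a b) (swapVar v)) using 1
    rw [blockWeight_swapVar, add_neg_cancel]
  rcases hg with (⟨i, rfl⟩ | ⟨j, rfl⟩) | rfl
  · exact (isWeightedHomogeneous_C _ _).sub (hXX (xv i))
  · exact (isWeightedHomogeneous_C _ _).sub (hXX (yv j))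
  · exact isWeightedHomogeneous_one ℂ (blockWeight a b)

theorem isWeightedHomogeneous_blockWeight_monomial (al al' be be' : Fin d → ℕ) :
    IsWeightedHomogeneous (blockWeight a b)
      ((∏ i, X (xv i) ^ al i) * (∏ i, X (xbv i) ^ al' i) *
        (∏ j, X (yv j) ^ be j) * (∏ j, X (ybv j) ^ be' j) : SPoly d)
      (a * ((∑ i, al i : ℕ) - (∑ i, al' i : ℕ)) +
        b * ((∑ j, be j : ℕ) - (∑ j, be' j : ℕ))) := by
  have hprod : ∀ (f : Fin d → SVar d) (e : Fin d → ℕ),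
      IsWeightedHomogeneous (blockWeight a b) (∏ i, X (f i) ^ e i : SPoly d)
        (∑ i, e i • blockWeight a b (f i)) := fun f e =>
    .prod _ _ _ fun i _ => (isWeightedHomogeneous_X ℂ (blockWeight a b) (f i)).pow (e i)
  convert (((hprod xv al).mul (hprod xbv al')).mul (hprod yv be)).mul (hprod ybv be') using 1
  simp only [blockWeight, xv, xbv, yv, ybv, Sum.elim_inl, Sum.elim_inr,
    nsmul_eq_mul, ← Finset.sum_mul]
  push_cast
  ring

theorem circleAction_mapsTo_QMt (u : Circle) :
    Set.MapsTo (circleAction (blockWeight a b) u) (QMt d (Sloc d ρ) t) (QMt d (Sloc d ρ) t) := by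
  rintro _ ⟨N, c, g, p, hc, hg, hdeg, rfl⟩
  set p' := fun s => circleAction (blockWeight a b) u (p s)
  have hterm : ∀ s, circleAction (blockWeight a b) u (g s * (p s * sconj (p s))) =
      g s * (p' s * sconj (p' s)) := fun s => by
    rw [map_mul, map_mul,
      (isWeightedHomogeneous_blockWeight_of_mem_Sloc_union a b (hg s)).circleAction_eq,
      sconj_circleAction (blockWeight_swapVar a b)]
  refine ⟨N, c, g, p', hc, hg, fun s => ?_, ?_⟩
  · rw [← hterm]
    exact (totalDegree_circleAction_le _ _ _).trans (hdeg s)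
  · simp only [map_sum, map_mul, circleAction_C, hterm]

theorem circleAction_sepLocalizer (u : Circle) (q : Fin d → Fin d → SPoly d) :
    circleAction (blockWeight a b) u (sepLocalizer ρ q) =
      sepLocalizer ρ fun i j => circleAction (blockWeight a b) u (q i j) := by
  simp only [sepLocalizer, map_sum, map_mul, map_sub, circleAction_C,
    (isWeightedHomogeneous_blockWeight_momPoly a b _ _ _ _).circleAction_eq,
    sconj_circleAction (blockWeight_swapVar a b)]

theorem circleAction_mapsTo_sepLocalizer (u : Circle) :
    Set.MapsTo (circleAction (blockWeight a b) u)
      (sepLocalizer ρ '' {q | ∀ i j, (q i j).totalDegree ≤ t - 2})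
      (sepLocalizer ρ '' {q | ∀ i j, (q i j).totalDegree ≤ t - 2}) := by
  rintro _ ⟨q, hq, rfl⟩
  exact ⟨_, fun i j => (totalDegree_circleAction_le _ _ _).trans (hq i j),
    (circleAction_sepLocalizer a b u q).symm⟩

theorem IsFeas.comp_weightedHomogeneousComponent_blockWeight {L : SPoly d →ₗ[ℂ] ℂ}
    (hL : IsFeas d t ρ L) :
    IsFeas d t ρ (L ∘ₗ weightedHomogeneousComponent (blockWeight a b) 0) := by
  obtain ⟨hherm, hmom, hqm, hloc⟩ := hL
  refine ⟨fun p => ?_, fun i i' j j' => ?_, fun q hq => ?_, fun q hq => ?_⟩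
  · rw [LinearMap.comp_apply, LinearMap.comp_apply,
      weightedHomogeneousComponent_zero_sconj (blockWeight_swapVar a b), hherm]
  · rw [LinearMap.comp_apply, IsWeightedHomogeneous.weightedHomogeneousComponent_same
      (isWeightedHomogeneous_blockWeight_momPoly a b i i' j j'), hmom]
  · exact nonneg_apply_weightedHomogeneousComponent_zero _ (circleAction_mapsTo_QMt a b) hqm hq
  · rw [← map_sepLocalizer]
    refine nonneg_apply_weightedHomogeneousComponent_zero _
      (circleAction_mapsTo_sepLocalizer a b) ?_ ⟨q, hq, rfl⟩
    rintro _ ⟨q', hq', rfl⟩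
    rw [map_sepLocalizer]
    exact hloc q' hq'

end BlockWeight

noncomputable def balancedPart {d : ℕ} : SPoly d →ₗ[ℂ] SPoly d :=
  weightedHomogeneousComponent (blockWeight 1 0) 0 ∘ₗ
    weightedHomogeneousComponent (blockWeight 0 1) 0

theorem balancedL_comp_balancedPart {d : ℕ} (L : SPoly d →ₗ[ℂ] ℂ) :
    BalancedL d (L ∘ₗ balancedPart) := by
  intro al al' be be' hne
  have hM := (isWeightedHomogeneous_blockWeight_monomial (d := d) · · al al' be be')
  rw [LinearMap.comp_apply, balancedPart, LinearMap.comp_apply]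
  by_cases hbe : ∑ j, be j = ∑ j, be' j
  · have hal : ∑ i, al i ≠ ∑ i, al' i := hne.resolve_right (not_not.2 hbe)
    have h01 := hM 0 1
    rw [hbe, sub_self, mul_zero, zero_mul, add_zero] at h01
    rw [h01.weightedHomogeneousComponent_same, (hM 1 0).weightedHomogeneousComponent_ne 0 ?_,
      map_zero]
    simp only [one_mul, zero_mul, add_zero]
    omega
  · rw [(hM 0 1).weightedHomogeneousComponent_ne 0 ?_, map_zero, map_zero]
    simp only [one_mul, zero_mul, zero_add]
    omega

theorem balancedPart_one {d : ℕ} : balancedPart (1 : SPoly d) = 1 := by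
  rw [balancedPart, LinearMap.comp_apply,
    (isWeightedHomogeneous_one ℂ (blockWeight 0 1)).weightedHomogeneousComponent_same,
    (isWeightedHomogeneous_one ℂ (blockWeight 1 0)).weightedHomogeneousComponent_same]

theorem IsFeas.comp_balancedPart {d t : ℕ} {ρ : Matrix (Fin d × Fin d) (Fin d × Fin d) ℂ}
    {L : SPoly d →ₗ[ℂ] ℂ} (hL : IsFeas d t ρ L) : IsFeas d t ρ (L ∘ₗ balancedPart) :=
  IsFeas.comp_weightedHomogeneousComponent_blockWeight 0 1
    (hL.comp_weightedHomogeneousComponent_blockWeight 1 0)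

theorem stmt11_general {d : ℕ} (ρ : Matrix (Fin d × Fin d) (Fin d × Fin d) ℂ)
    (t : ℕ) :
    (∀ L : SPoly d →ₗ[ℂ] ℂ, IsFeas d t ρ L →
      ∃ L' : SPoly d →ₗ[ℂ] ℂ, IsFeas d t ρ L' ∧ L' 1 = L 1 ∧ BalancedL d L') ∧
    xiSep d t ρ =
      sInf { e | ∃ L : SPoly d →ₗ[ℂ] ℂ, IsFeas d t ρ L ∧ BalancedL d L ∧
        e = ENNReal.ofReal (L 1).re } := by
  have hbal : ∀ L : SPoly d →ₗ[ℂ] ℂ, IsFeas d t ρ L →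
      IsFeas d t ρ (L ∘ₗ balancedPart) ∧ (L ∘ₗ balancedPart) 1 = L 1 ∧
        BalancedL d (L ∘ₗ balancedPart) := fun L hL =>
    ⟨hL.comp_balancedPart, by rw [LinearMap.comp_apply, balancedPart_one],
      balancedL_comp_balancedPart L⟩
  refine ⟨fun L hL => ⟨_, hbal L hL⟩, ?_⟩
  rw [xiSep]
  congr 1
  ext e
  constructor
  · rintro ⟨L, hL, rfl⟩
    obtain ⟨hfeas, hone, hbalanced⟩ := hbal L hL
    exact ⟨_, hfeas, hbalanced, by rw [hone]⟩
  · rintro ⟨L, hL, -, rfl⟩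
    exact ⟨L, hL, rfl⟩

/-- every feasible `L` for the order-`t` program can be replaced
by a feasible `L̃` with the same value `L̃(1) = L(1)` vanishing on unbalanced
monomials; consequently restricting to such functionals does not change
`ξ_t^sep(ρ)`. -/
theorem stmt11 {d : ℕ} (ρ : Matrix (Fin d × Fin d) (Fin d × Fin d) ℂ)
    (hρ : ρ.IsHermitian) (t : ℕ) (ht : 2 ≤ t) :
    (∀ L : SPoly d →ₗ[ℂ] ℂ, IsFeas d t ρ L →
      ∃ L' : SPoly d →ₗ[ℂ] ℂ, IsFeas d t ρ L' ∧ L' 1 = L 1 ∧ BalancedL d L') ∧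
    xiSep d t ρ =
      sInf { e | ∃ L : SPoly d →ₗ[ℂ] ℂ, IsFeas d t ρ L ∧ BalancedL d L ∧
        e = ENNReal.ofReal (L 1).re } :=
  stmt11_general ρ t
end

section
/- Let k, t ≥ 1 be integers and let L be a linear functional on ℂ[x,x̄,y,ȳ]_{2k,2t} such that: (a) L((1 − ∑_{i=1}^d x_i x̄_i)·p) = 0 and L((1 − ∑_{j=1}^d y_j ȳ_j)·q) = 0 whenever the products lie in ℂ[x,x̄,y,ȳ]_{2k,2t}; (b) L(x^α x̄^{α'} y^β ȳ^{β'}) = 0 for all monomials in ℂ[x,x̄,y,ȳ]_{2k,2t} with |α| ≠ |α'| or |β| ≠ |β'|. Then L(p·p̄) ≥ 0 for every polynomial p ∈ ℂ[x,x̄,y,ȳ]_{k,t} if and only if L(σ) ≥ 0 for every σ ∈ Σ_{=2k,=2t}. -/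
open MvPolynomial ComplexOrder
open scoped ENNReal

/-- Degree in the `x,x̄` variables of a monomial exponent. -/
def degXm (d : ℕ) (e : SVar d →₀ ℕ) : ℕ := ∑ i : Fin d, (e (xv i) + e (xbv i))

/-- Degree in the `y,ȳ` variables of a monomial exponent. -/
def degYm (d : ℕ) (e : SVar d →₀ ℕ) : ℕ := ∑ j : Fin d, (e (yv j) + e (ybv j))

/-- `p ∈ ℂ[x,x̄,y,ȳ]_{k,t}`: every monomial of `p` has degree at most `k` in
`x,x̄` and at most `t` in `y,ȳ`. -/
def MemBi (d : ℕ) (p : SPoly d) (k t : ℕ) : Prop :=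
  ∀ e ∈ p.support, degXm d e ≤ k ∧ degYm d e ≤ t

/-- The cone `Σ_{=2k,=2t}`: sums `∑ p_s conj(p_s)` with `p_s ∈ ℂ[x,x̄,y,ȳ]_{k,t}`
all of whose monomials have degree exactly `2k` in `x,x̄` and exactly `2t` in
`y,ȳ`. -/
def SigEq (d k t : ℕ) : Set (SPoly d) :=
  { σ | (∃ (N : ℕ) (p : Fin N → SPoly d), (∀ s, MemBi d (p s) k t) ∧
          σ = ∑ s, p s * sconj (p s)) ∧
        ∀ e ∈ σ.support, degXm d e = 2 * k ∧ degYm d e = 2 * t }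

/-!
The Hermitian square `p * sconj p` splits along the charge grading `(|α| - |α'|, |β| - |β'|)`:
products of components of different charges are unbalanced and are killed by `L`. Inside one
charge class all monomials have `x`- and `y`-degrees of fixed parities, and `L` does not see
multiplication by `Sx = ∑ xᵢ x̄ᵢ` or `Sy = ∑ yⱼ ȳⱼ` as long as the degrees stay within
`(2k, 2t)`. So every monomial of the class can be lifted to a common bidegree `(a, b)` with
`k - a, t - b ∈ {0, 1}` without changing `L (q * sconj q)`, and a last factor
`Sx ^ (k - a) * Sy ^ (t - b)`, itself a sum of Hermitian squares, lands the resulting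
bihomogeneous Hermitian square in `Σ_{=2k,=2t}`.
-/

open Finsupp (weight)

section Weights

variable {d : ℕ}

def bideg (d : ℕ) : SVar d → ℕ × ℕ :=
  Sum.elim (fun _ => (1, 0)) (fun _ => (0, 1))

def charge (d : ℕ) : SVar d → ℤ × ℤ :=
  Sum.elim (Sum.elim (fun _ => (1, 0)) (fun _ => (-1, 0)))
    (Sum.elim (fun _ => (0, 1)) (fun _ => (0, -1)))

def barSwap (d : ℕ) : SVar d ≃ SVar d :=
  Equiv.sumCongr (Equiv.sumComm _ _) (Equiv.sumComm _ _)

lemma weight_bideg (e : SVar d →₀ ℕ) : weight (bideg d) e = (degXm d e, degYm d e) := by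
  ext <;> simp [Finsupp.weight_eq_sum, Fintype.sum_sum_type, bideg, degXm, degYm, xv, xbv, yv, ybv,
    Prod.fst_sum, Prod.snd_sum, Finset.sum_add_distrib]

lemma weight_charge (e : SVar d →₀ ℕ) :
    weight (charge d) e = (((∑ i, e (xv i) : ℕ) : ℤ) - (∑ i, e (xbv i) : ℕ),
      ((∑ j, e (yv j) : ℕ) : ℤ) - (∑ j, e (ybv j) : ℕ)) := by
  ext <;> simp [Finsupp.weight_eq_sum, Fintype.sum_sum_type, charge, xv, xbv, yv, ybv,
    Prod.fst_sum, Prod.snd_sum, sub_eq_add_neg]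

lemma weight_mapDomain {σ τ M : Type*} [AddCommMonoid M] (w : τ → M) (f : σ → τ)
    (e : σ →₀ ℕ) : weight w (e.mapDomain f) = weight (w ∘ f) e := by
  simp only [Finsupp.weight_apply]
  exact Finsupp.sum_mapDomain_index (fun _ => zero_smul _ _) fun _ _ _ => add_smul _ _ _

lemma bideg_comp_barSwap : bideg d ∘ barSwap d = bideg d := by
  ext ((i | i) | (j | j)) <;> rfl

lemma charge_comp_barSwap : charge d ∘ barSwap d = -charge d := by
  ext ((i | i) | (j | j)) <;> simp [barSwap, charge]

end Weights

section Conj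

variable {d : ℕ}

lemma barSwap_barSwap (v : SVar d) : barSwap d (barSwap d v) = v := by
  rcases v with (i | i) | (j | j) <;> rfl

lemma barSwap_xv (i : Fin d) : barSwap d (xv i) = xbv i := rfl

lemma barSwap_xbv (i : Fin d) : barSwap d (xbv i) = xv i := rfl

lemma barSwap_yv (j : Fin d) : barSwap d (yv j) = ybv j := rfl

lemma barSwap_ybv (j : Fin d) : barSwap d (ybv j) = yv j := rfl

lemma sconj_eq_rename_map (p : SPoly d) :
    sconj p = rename (barSwap d) (map (starRingEnd ℂ) p) :=
  rfl

lemma sconj_mul (p q : SPoly d) : sconj (p * q) = sconj p * sconj q := by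
  simp [sconj]

lemma sconj_pow (p : SPoly d) (n : ℕ) : sconj (p ^ n) = sconj p ^ n := by
  simp [sconj]

lemma sconj_sum {ι : Type*} (s : Finset ι) (f : ι → SPoly d) :
    sconj (∑ i ∈ s, f i) = ∑ i ∈ s, sconj (f i) := by
  simp [sconj]

lemma sconj_X (v : SVar d) : sconj (X v : SPoly d) = X (barSwap d v) := by
  rw [sconj_eq_rename_map, map_X, rename_X]

lemma sconj_monomial (e : SVar d →₀ ℕ) (a : ℂ) :
    sconj (monomial e a) = monomial (e.mapDomain (barSwap d)) (starRingEnd ℂ a) := by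
  rw [sconj_eq_rename_map, map_monomial, rename_monomial]

lemma isWeightedHomogeneous_sconj {M : Type*} [AddCommMonoid M] {w : SVar d → M} {p : SPoly d}
    {m : M} (hp : IsWeightedHomogeneous w p m) :
    IsWeightedHomogeneous (w ∘ barSwap d) (sconj p) m := by
  rw [← p.support_sum_monomial_coeff, sconj_sum]
  refine IsWeightedHomogeneous.sum _ _ _ fun e he => ?_
  rw [sconj_monomial]
  refine isWeightedHomogeneous_monomial _ _ _ ?_
  rw [weight_mapDomain, Function.comp_assoc]
  simpa [Function.comp_def, barSwap_barSwap] using hp (mem_support_iff.mp he)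

end Conj

section Bidegree

variable {d : ℕ}

lemma memBi_iff {p : SPoly d} {k t : ℕ} :
    MemBi d p k t ↔ ∀ e ∈ p.support, weight (bideg d) e ≤ (k, t) := by
  simp [MemBi, weight_bideg]

lemma MvPolynomial.IsWeightedHomogeneous.memBi {p : SPoly d} {m : ℕ × ℕ} {k t : ℕ}
    (hp : IsWeightedHomogeneous (bideg d) p m) (hm : m ≤ (k, t)) : MemBi d p k t :=
  memBi_iff.2 fun _ he => hp (mem_support_iff.1 he) ▸ hm

lemma MemBi.sub {p q : SPoly d} {k t : ℕ} (hp : MemBi d p k t) (hq : MemBi d q k t) :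
    MemBi d (p - q) k t := fun e he =>
  (Finset.mem_union.1 (support_sub _ p q he)).elim (hp e) (hq e)

lemma MemBi.mul {p q : SPoly d} {k t k' t' : ℕ} (hp : MemBi d p k t) (hq : MemBi d q k' t') :
    MemBi d (p * q) (k + k') (t + t') := by
  rw [memBi_iff] at *
  intro e he
  obtain ⟨e₁, he₁, e₂, he₂, rfl⟩ := Finset.mem_add.1 (support_mul p q he)
  rw [map_add, ← Prod.mk_add_mk]
  exact add_le_add (hp e₁ he₁) (hq e₂ he₂)

lemma MemBi.sconj {p : SPoly d} {k t : ℕ} (hp : MemBi d p k t) : MemBi d (sconj p) k t := by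
  classical
  rw [memBi_iff] at *
  intro e he
  rw [sconj_eq_rename_map, support_rename_of_injective (barSwap d).injective,
    support_map_of_injective _ (RingHom.injective _)] at he
  obtain ⟨e', he', rfl⟩ := Finset.mem_image.1 he
  rw [weight_mapDomain, bideg_comp_barSwap]
  exact hp e' he'

lemma MemBi.weightedHomogeneousComponent {M : Type*} [AddCommMonoid M] (w : SVar d → M) (c : M)
    {p : SPoly d} {k t : ℕ} (hp : MemBi d p k t) :
    MemBi d (weightedHomogeneousComponent w c p) k t := by
  classical
  intro e he
  rw [support_weightedHomogeneousComponent] at he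
  exact hp e (Finset.mem_filter.1 he).1

lemma MvPolynomial.IsWeightedHomogeneous.sconj_bideg {p : SPoly d} {m : ℕ × ℕ}
    (hp : IsWeightedHomogeneous (bideg d) p m) : IsWeightedHomogeneous (bideg d) (sconj p) m := by
  simpa [bideg_comp_barSwap] using isWeightedHomogeneous_sconj hp

noncomputable def Sx (d : ℕ) : SPoly d := ∑ i, X (xv i) * X (xbv i)

noncomputable def Sy (d : ℕ) : SPoly d := ∑ j, X (yv j) * X (ybv j)

lemma Sx_eq_sum_mul_sconj : Sx d = ∑ i, X (xv i) * sconj (X (xv i)) := by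
  simp only [Sx, sconj_X, barSwap_xv]

lemma Sy_eq_sum_mul_sconj : Sy d = ∑ j, X (yv j) * sconj (X (yv j)) := by
  simp only [Sy, sconj_X, barSwap_yv]

lemma sconj_Sx : sconj (Sx d) = Sx d := by
  simp only [Sx, sconj_sum, sconj_mul, sconj_X, barSwap_xv, barSwap_xbv, mul_comm]

lemma sconj_Sy : sconj (Sy d) = Sy d := by
  simp only [Sy, sconj_sum, sconj_mul, sconj_X, barSwap_yv, barSwap_ybv, mul_comm]

lemma isWeightedHomogeneous_X_xv (i : Fin d) :
    IsWeightedHomogeneous (bideg d) (X (xv i) : SPoly d) (1, 0) :=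
  isWeightedHomogeneous_X _ _ _

lemma isWeightedHomogeneous_X_yv (j : Fin d) :
    IsWeightedHomogeneous (bideg d) (X (yv j) : SPoly d) (0, 1) :=
  isWeightedHomogeneous_X _ _ _

lemma isWeightedHomogeneous_Sx : IsWeightedHomogeneous (bideg d) (Sx d) (2, 0) :=
  IsWeightedHomogeneous.sum _ _ _ fun i _ =>
    (isWeightedHomogeneous_X_xv i).mul (isWeightedHomogeneous_X _ _ (xbv i))

lemma isWeightedHomogeneous_Sy : IsWeightedHomogeneous (bideg d) (Sy d) (0, 2) :=
  IsWeightedHomogeneous.sum _ _ _ fun j _ =>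
    (isWeightedHomogeneous_X_yv j).mul (isWeightedHomogeneous_X _ _ (ybv j))

end Bidegree

section HermitianSquares

variable {d : ℕ}

def HermSOS (d : ℕ) (m : ℕ × ℕ) : Set (SPoly d) :=
  { σ | ∃ (ι : Type) (_ : Fintype ι) (p : ι → SPoly d),
      (∀ s, IsWeightedHomogeneous (bideg d) (p s) m) ∧ σ = ∑ s, p s * sconj (p s) }

lemma mul_sconj_mem_hermSOS {p : SPoly d} {m : ℕ × ℕ}
    (hp : IsWeightedHomogeneous (bideg d) p m) : p * sconj p ∈ HermSOS d m :=
  ⟨Unit, inferInstance, fun _ => p, fun _ => hp, by simp⟩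

lemma sum_mul_sconj_mul_mem_hermSOS {κ : Type} [Fintype κ] {u : κ → SPoly d} {s m : ℕ × ℕ}
    (hu : ∀ i, IsWeightedHomogeneous (bideg d) (u i) s) {σ : SPoly d}
    (hσ : σ ∈ HermSOS d m) : (∑ i, u i * sconj (u i)) * σ ∈ HermSOS d (s + m) := by
  obtain ⟨ι, _, p, hp, rfl⟩ := hσ
  refine ⟨κ × ι, inferInstance, fun ij => u ij.1 * p ij.2, fun ij => (hu _).mul (hp _), ?_⟩
  rw [Finset.sum_mul_sum, Fintype.sum_prod_type]
  simp only [sconj_mul, mul_mul_mul_comm]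

lemma pow_mul_mem_hermSOS {κ : Type} [Fintype κ] {u : κ → SPoly d} {s m : ℕ × ℕ}
    (hu : ∀ i, IsWeightedHomogeneous (bideg d) (u i) s) {σ : SPoly d} (hσ : σ ∈ HermSOS d m)
    (n : ℕ) : (∑ i, u i * sconj (u i)) ^ n * σ ∈ HermSOS d (n • s + m) := by
  induction n with
  | zero => simpa using hσ
  | succ n ih =>
    rw [pow_succ', mul_assoc, succ_nsmul', add_assoc]
    exact sum_mul_sconj_mul_mem_hermSOS hu ih

lemma hermSOS_subset_sigEq (k t : ℕ) : HermSOS d (k, t) ⊆ SigEq d k t := by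
  rintro _ ⟨ι, _, p, hp, rfl⟩
  refine ⟨⟨_, p ∘ (Fintype.equivFin ι).symm, fun s => (hp _).memBi le_rfl,
    ((Fintype.equivFin ι).symm.sum_comp _).symm⟩, fun e he => ?_⟩
  have hhom : IsWeightedHomogeneous (bideg d) (∑ s, p s * sconj (p s)) ((k, t) + (k, t)) :=
    IsWeightedHomogeneous.sum _ _ _ fun s _ => (hp s).mul (hp s).sconj_bideg
  have := hhom (mem_support_iff.1 he)
  simp only [weight_bideg, Prod.mk_add_mk, Prod.mk.injEq] at this
  omega

end HermitianSquares

section Shift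

variable {d : ℕ} {L : SPoly d →ₗ[ℂ] ℂ} {k t : ℕ}

lemma map_eq_map_pow_mul {K₁ K₂ : ℕ} {S : SPoly d} {s : ℕ × ℕ}
    (hS : IsWeightedHomogeneous (bideg d) S s)
    (hL : ∀ p, MemBi d ((1 - S) * p) K₁ K₂ → L ((1 - S) * p) = 0)
    {f : SPoly d} {m : ℕ × ℕ} (hf : IsWeightedHomogeneous (bideg d) f m) :
    ∀ n : ℕ, m + n • s ≤ (K₁, K₂) → L f = L (S ^ n * f)
  | 0, _ => by simp
  | n + 1, hm => by
    have hle : m + n • s ≤ m + (n + 1) • s := by gcongr; omega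
    have hSf : IsWeightedHomogeneous (bideg d) (S ^ n * f) (n • s + m) := (hS.pow n).mul hf
    have hstep := hL (S ^ n * f) <| by
      rw [sub_mul, one_mul]
      refine MemBi.sub (hSf.memBi ?_) ((hS.mul hSf).memBi ?_)
      · rw [add_comm]; exact hle.trans hm
      · rwa [← add_assoc, ← succ_nsmul', add_comm]
    rw [sub_mul, one_mul, map_sub, sub_eq_zero, ← mul_assoc, ← pow_succ'] at hstep
    rw [map_eq_map_pow_mul hS hL hf n (hle.trans hm), hstep]

lemma map_eq_map_Sx_pow_mul_Sy_pow_mul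
    (hidx : ∀ p, MemBi d ((1 - Sx d) * p) (2 * k) (2 * t) → L ((1 - Sx d) * p) = 0)
    (hidy : ∀ p, MemBi d ((1 - Sy d) * p) (2 * k) (2 * t) → L ((1 - Sy d) * p) = 0)
    {f : SPoly d} {a b : ℕ} (hf : IsWeightedHomogeneous (bideg d) f (a, b)) {n n' : ℕ}
    (ha : a + 2 * n ≤ 2 * k) (hb : b + 2 * n' ≤ 2 * t) :
    L f = L (Sx d ^ n * (Sy d ^ n' * f)) := by
  refine (map_eq_map_pow_mul isWeightedHomogeneous_Sy hidy hf n' ?_).trans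
    (map_eq_map_pow_mul isWeightedHomogeneous_Sx hidx
      ((isWeightedHomogeneous_Sy.pow n').mul hf) n ?_) <;>
  simp only [Prod.smul_mk, smul_eq_mul, Prod.mk_add_mk, Prod.mk_le_mk] <;> omega

lemma isWeightedHomogeneous_monomial_bideg (e : SVar d →₀ ℕ) (c : ℂ) :
    IsWeightedHomogeneous (bideg d) (monomial e c) (degXm d e, degYm d e) :=
  isWeightedHomogeneous_monomial _ _ _ (weight_bideg e)

lemma exists_isWeightedHomogeneous_map_mul_sconj_eq
    (hidx : ∀ p, MemBi d ((1 - Sx d) * p) (2 * k) (2 * t) → L ((1 - Sx d) * p) = 0)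
    (hidy : ∀ p, MemBi d ((1 - Sy d) * p) (2 * k) (2 * t) → L ((1 - Sy d) * p) = 0)
    {q : SPoly d} {a b : ℕ} (ha : a ≤ k) (hb : b ≤ t)
    (hq : ∀ e ∈ q.support, degXm d e ≤ a ∧ degYm d e ≤ b ∧
      degXm d e % 2 = a % 2 ∧ degYm d e % 2 = b % 2) :
    ∃ q', IsWeightedHomogeneous (bideg d) q' (a, b) ∧ L (q * sconj q) = L (q' * sconj q') := by
  obtain ⟨jx, jy, hj⟩ : ∃ jx jy : (SVar d →₀ ℕ) → ℕ,
      ∀ e ∈ q.support, degXm d e + 2 * jx e = a ∧ degYm d e + 2 * jy e = b :=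
    ⟨fun e => (a - degXm d e) / 2, fun e => (b - degYm d e) / 2,
      fun e he => by dsimp only; have := hq e he; omega⟩
  set lift := fun e => Sx d ^ jx e * (Sy d ^ jy e * monomial e (coeff e q))
  refine ⟨∑ e ∈ q.support, lift e, IsWeightedHomogeneous.sum _ _ _ fun e he => ?_, ?_⟩
  · have := (isWeightedHomogeneous_Sx.pow (jx e)).mul
      ((isWeightedHomogeneous_Sy.pow (jy e)).mul
        (isWeightedHomogeneous_monomial_bideg e (coeff e q)))
    convert this using 1
    have := hj e he
    simp only [Prod.smul_mk, smul_eq_mul, Prod.mk_add_mk, Prod.mk.injEq]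
    omega
  conv_lhs => rw [← q.support_sum_monomial_coeff]
  simp only [sconj_sum, Finset.sum_mul_sum, map_sum]
  refine Finset.sum_congr rfl fun e he => Finset.sum_congr rfl fun e' he' => ?_
  have hlift : lift e * sconj (lift e') = Sx d ^ (jx e + jx e') * (Sy d ^ (jy e + jy e') *
      (monomial e (coeff e q) * sconj (monomial e' (coeff e' q)))) := by
    simp only [lift, sconj_mul, sconj_pow, sconj_Sx, sconj_Sy]
    ring
  rw [hlift]
  exact map_eq_map_Sx_pow_mul_Sy_pow_mul hidx hidy ((isWeightedHomogeneous_monomial_bideg e _).mul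
    (isWeightedHomogeneous_monomial_bideg e' _).sconj_bideg)
    (by have := hj e he; have := hj e' he'; omega) (by have := hj e he; have := hj e' he'; omega)

end Shift

section Charge

variable {d : ℕ}

lemma MvPolynomial.IsWeightedHomogeneous.sconj_charge {p : SPoly d} {c : ℤ × ℤ}
    (hp : IsWeightedHomogeneous (charge d) p c) :
    IsWeightedHomogeneous (charge d) (sconj p) (-c) := by
  intro e he
  have := isWeightedHomogeneous_sconj hp he
  rw [charge_comp_barSwap] at this
  simp only [Finsupp.weight_eq_sum, Pi.neg_apply, smul_neg, Finset.sum_neg_distrib] at this ⊢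
  rw [← this, neg_neg]

lemma degXm_mod_two_eq_of_weight_charge_eq {e e' : SVar d →₀ ℕ}
    (h : weight (charge d) e = weight (charge d) e') :
    degXm d e % 2 = degXm d e' % 2 ∧ degYm d e % 2 = degYm d e' % 2 := by
  rw [weight_charge, weight_charge, Prod.mk.injEq] at h
  simp only [degXm, degYm, Finset.sum_add_distrib]
  omega

lemma sum_weightedHomogeneousComponent_image {σ R M : Type*} [CommSemiring R] [AddCommMonoid M]
    [DecidableEq M] (w : σ → M) (φ : MvPolynomial σ R) :
    ∑ m ∈ φ.support.image (weight w), weightedHomogeneousComponent w m φ = φ := by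
  refine (finsum_eq_sum_of_support_subset _ fun m hm => ?_).symm.trans
    (sum_weightedHomogeneousComponent w φ)
  by_contra hnot
  exact hm (weightedHomogeneousComponent_eq_zero' m φ fun e he hem =>
    hnot (Finset.mem_coe.2 (Finset.mem_image.2 ⟨e, he, hem⟩)))

lemma monomial_one_eq_prod (e : SVar d →₀ ℕ) :
    (monomial e 1 : SPoly d) =
      (∏ i, X (xv i) ^ e (xv i)) * (∏ i, X (xbv i) ^ e (xbv i)) *
      (∏ j, X (yv j) ^ e (yv j)) * (∏ j, X (ybv j) ^ e (ybv j)) := by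
  rw [monomial_eq, C_1, one_mul, Finsupp.prod_fintype _ _ fun v => pow_zero (X v),
    Fintype.prod_sum_type, Fintype.prod_sum_type, Fintype.prod_sum_type]
  simp only [xv, xbv, yv, ybv, mul_assoc]

variable {L : SPoly d →ₗ[ℂ] ℂ} {k t : ℕ}

lemma map_monomial_eq_zero_of_weight_charge_ne_zero
    (hbal : ∀ al al' be be' : Fin d → ℕ,
      (∑ i, (al i + al' i)) ≤ 2 * k → (∑ j, (be j + be' j)) ≤ 2 * t →
      ((∑ i, al i) ≠ (∑ i, al' i) ∨ (∑ j, be j) ≠ (∑ j, be' j)) →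
      L ((∏ i, X (xv i) ^ al i) * (∏ i, X (xbv i) ^ al' i) *
          (∏ j, X (yv j) ^ be j) * (∏ j, X (ybv j) ^ be' j)) = 0)
    {e : SVar d →₀ ℕ} (hx : degXm d e ≤ 2 * k) (hy : degYm d e ≤ 2 * t)
    (he : weight (charge d) e ≠ 0) : L (monomial e 1) = 0 := by
  refine monomial_one_eq_prod e ▸ hbal _ _ _ _ hx hy ?_
  rw [weight_charge] at he
  contrapose! he
  simp [he.1, he.2]

lemma map_eq_zero_of_isWeightedHomogeneous_charge
    (hL : ∀ e, degXm d e ≤ 2 * k → degYm d e ≤ 2 * t → weight (charge d) e ≠ 0 →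
      L (monomial e 1) = 0)
    {f : SPoly d} {c : ℤ × ℤ} (hf : IsWeightedHomogeneous (charge d) f c) (hc : c ≠ 0)
    (hfk : MemBi d f (2 * k) (2 * t)) : L f = 0 := by
  rw [← f.support_sum_monomial_coeff, map_sum]
  refine Finset.sum_eq_zero fun e he => ?_
  rw [← mul_one (coeff e f), ← smul_eq_mul, ← smul_monomial, map_smul,
    hL e (hfk e he).1 (hfk e he).2 (hf (mem_support_iff.1 he) ▸ hc), smul_zero]

lemma map_mul_sconj_eq_sum_charge
    (hL : ∀ e, degXm d e ≤ 2 * k → degYm d e ≤ 2 * t → weight (charge d) e ≠ 0 →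
      L (monomial e 1) = 0)
    {p : SPoly d} (hp : MemBi d p k t) :
    L (p * sconj p) = ∑ c ∈ p.support.image (weight (charge d)),
      L (weightedHomogeneousComponent (charge d) c p *
        sconj (weightedHomogeneousComponent (charge d) c p)) := by
  classical
  conv_lhs => rw [← sum_weightedHomogeneousComponent_image (charge d) p]
  rw [sconj_sum, Finset.sum_mul_sum, map_sum]
  refine Finset.sum_congr rfl fun c hc => ?_
  rw [map_sum, Finset.sum_eq_single_of_mem c hc fun c' _ hne => ?_]
  refine map_eq_zero_of_isWeightedHomogeneous_charge hL
    ((weightedHomogeneousComponent_isWeightedHomogeneous c p).mul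
      (weightedHomogeneousComponent_isWeightedHomogeneous c' p).sconj_charge)
    (by rwa [← sub_eq_add_neg, sub_ne_zero, ne_comm]) ?_
  rw [two_mul, two_mul]
  exact (hp.weightedHomogeneousComponent _ c).mul (hp.weightedHomogeneousComponent _ c').sconj

end Charge

lemma map_mul_sconj_nonneg_of_isWeightedHomogeneous_charge {d k t : ℕ}
    {L : SPoly d →ₗ[ℂ] ℂ}
    (hidx : ∀ p, MemBi d ((1 - Sx d) * p) (2 * k) (2 * t) → L ((1 - Sx d) * p) = 0)
    (hidy : ∀ p, MemBi d ((1 - Sy d) * p) (2 * k) (2 * t) → L ((1 - Sy d) * p) = 0)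
    (hsig : ∀ σ ∈ SigEq d k t, 0 ≤ L σ) {q : SPoly d} {c : ℤ × ℤ}
    (hq : IsWeightedHomogeneous (charge d) q c) (hqk : MemBi d q k t) :
    0 ≤ L (q * sconj q) := by
  rcases q.support.eq_empty_or_nonempty with hempty | ⟨e₀, he₀⟩
  · simp [support_eq_empty.1 hempty]
  -- the largest `a ≤ k` with the parity shared by all `x`-degrees of `q`; likewise `b`
  set a := k - (k - degXm d e₀) % 2
  set b := t - (t - degYm d e₀) % 2
  obtain ⟨q', hq', hLq⟩ := exists_isWeightedHomogeneous_map_mul_sconj_eq hidx hidy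
    (a := a) (b := b) (by omega) (by omega) fun e he => by
      have := degXm_mod_two_eq_of_weight_charge_eq
        ((hq (mem_support_iff.1 he)).trans (hq (mem_support_iff.1 he₀)).symm)
      have := hqk e he
      have := hqk e₀ he₀
      omega
  have hq'q' : IsWeightedHomogeneous (bideg d) (q' * sconj q') (a + a, b + b) :=
    hq'.mul hq'.sconj_bideg
  rw [hLq, map_eq_map_Sx_pow_mul_Sy_pow_mul hidx hidy hq'q' (n := k - a) (n' := t - b)
    (by omega) (by omega)]
  refine hsig _ (hermSOS_subset_sigEq k t ?_)
  have hkt : (k, t) = (k - a) • ((1, 0) : ℕ × ℕ) + ((t - b) • (0, 1) + (a, b)) := by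
    simp only [Prod.smul_mk, smul_eq_mul, Prod.mk_add_mk, Prod.mk.injEq]
    omega
  rw [hkt, Sx_eq_sum_mul_sconj, Sy_eq_sum_mul_sconj]
  exact pow_mul_mem_hermSOS isWeightedHomogeneous_X_xv
    (pow_mul_mem_hermSOS isWeightedHomogeneous_X_yv (mul_sconj_mem_hermSOS hq') _) _

theorem stmt14_general {d : ℕ} (k t : ℕ)
    (L : SPoly d →ₗ[ℂ] ℂ)
    (hidx : ∀ p : SPoly d,
      MemBi d (((1 : SPoly d) - ∑ i, X (xv i) * X (xbv i)) * p) (2 * k) (2 * t) →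
      L (((1 : SPoly d) - ∑ i, X (xv i) * X (xbv i)) * p) = 0)
    (hidy : ∀ q : SPoly d,
      MemBi d (((1 : SPoly d) - ∑ j, X (yv j) * X (ybv j)) * q) (2 * k) (2 * t) →
      L (((1 : SPoly d) - ∑ j, X (yv j) * X (ybv j)) * q) = 0)
    (hbal : ∀ al al' be be' : Fin d → ℕ,
      (∑ i, (al i + al' i)) ≤ 2 * k → (∑ j, (be j + be' j)) ≤ 2 * t →
      ((∑ i, al i) ≠ (∑ i, al' i) ∨ (∑ j, be j) ≠ (∑ j, be' j)) →
      L ((∏ i, X (xv i) ^ al i) * (∏ i, X (xbv i) ^ al' i) *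
          (∏ j, X (yv j) ^ be j) * (∏ j, X (ybv j) ^ be' j)) = 0) :
    (∀ p : SPoly d, MemBi d p k t → 0 ≤ L (p * sconj p)) ↔
    (∀ σ ∈ SigEq d k t, 0 ≤ L σ) := by
  refine ⟨fun hsq σ ⟨⟨N, p, hp, hσ⟩, _⟩ => ?_, fun hsig p hp => ?_⟩
  · rw [hσ, map_sum]
    exact Finset.sum_nonneg fun s _ => hsq (p s) (hp s)
  · rw [map_mul_sconj_eq_sum_charge
      (fun _ => map_monomial_eq_zero_of_weight_charge_ne_zero hbal) hp]
    exact Finset.sum_nonneg fun c _ => map_mul_sconj_nonneg_of_isWeightedHomogeneous_charge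
      hidx hidy hsig (weightedHomogeneousComponent_isWeightedHomogeneous c p)
      (hp.weightedHomogeneousComponent _ c)

/-- for `L` vanishing on the truncated bi-sphere ideal and on
unbalanced monomials, positivity on all Hermitian squares `p·conj p` with
`p ∈ ℂ[x,x̄,y,ȳ]_{k,t}` is equivalent to positivity on `Σ_{=2k,=2t}`. -/
theorem stmt14 {d : ℕ} (k t : ℕ) (hk : 1 ≤ k) (ht : 1 ≤ t)
    (L : SPoly d →ₗ[ℂ] ℂ)
    (hidx : ∀ p : SPoly d,
      MemBi d (((1 : SPoly d) - ∑ i, X (xv i) * X (xbv i)) * p) (2 * k) (2 * t) →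
      L (((1 : SPoly d) - ∑ i, X (xv i) * X (xbv i)) * p) = 0)
    (hidy : ∀ q : SPoly d,
      MemBi d (((1 : SPoly d) - ∑ j, X (yv j) * X (ybv j)) * q) (2 * k) (2 * t) →
      L (((1 : SPoly d) - ∑ j, X (yv j) * X (ybv j)) * q) = 0)
    (hbal : ∀ al al' be be' : Fin d → ℕ,
      (∑ i, (al i + al' i)) ≤ 2 * k → (∑ j, (be j + be' j)) ≤ 2 * t →
      ((∑ i, al i) ≠ (∑ i, al' i) ∨ (∑ j, be j) ≠ (∑ j, be' j)) →
      L ((∏ i, X (xv i) ^ al i) * (∏ i, X (xbv i) ^ al' i) *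
          (∏ j, X (yv j) ^ be j) * (∏ j, X (ybv j) ^ be' j)) = 0) :
    (∀ p : SPoly d, MemBi d p k t → 0 ≤ L (p * sconj p)) ↔
    (∀ σ ∈ SigEq d k t, 0 ≤ L σ) :=
  stmt14_general k t L hidx hidy hbal
end

section
/- Let G ∈ ℂ[x,x̄]^{m×m} be a polynomial matrix and let G^ℝ ∈ ℝ[x_Re,x_Im]^{2m×2m} be the associated real polynomial matrix G^ℝ = [[G_Re, −G_Im],[G_Im, G_Re]]. Then G is a Hermitian SoS-polynomial matrix (i.e., G = U·U* for some k ∈ ℕ and some polynomial matrix U ∈ ℂ[x,x̄]^{m×k}, where (U*)_{sj} = conj-polynomial of U_{js}) if and only if G^ℝ is a real SoS-polynomial matrix (i.e., G^ℝ = V·V^T for some k' ∈ ℕ and some real polynomial matrix V ∈ ℝ[x_Re,x_Im]^{2m×k'}). -/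
open MvPolynomial

/-- The ring `ℂ[x,x̄]` (variables `x_i` encoded `Sum.inl i`, `x̄_i` encoded
`Sum.inr i`). -/
abbrev CPoly (n : ℕ) := MvPolynomial (Fin n ⊕ Fin n) ℂ

/-- The ring `ℝ[x_Re,x_Im]` (variables `(x_Re)_i` encoded `Sum.inl i`,
`(x_Im)_i` encoded `Sum.inr i`). -/
abbrev RPoly (n : ℕ) := MvPolynomial (Fin n ⊕ Fin n) ℝ

/-- The conjugate polynomial: conjugate all coefficients and exchange each
variable `x_i` with `x̄_i`. -/
noncomputable def cconj {n : ℕ} (p : CPoly n) : CPoly n :=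
  rename (Sum.elim Sum.inr Sum.inl) (map (starRingEnd ℂ) p)

/-- Substitute `x = x_Re + i·x_Im` and `x̄ = x_Re − i·x_Im`. -/
noncomputable def substReIm (n : ℕ) : CPoly n →ₐ[ℂ] CPoly n :=
  aeval (Sum.elim
    (fun i => X (Sum.inl i) + C Complex.I * X (Sum.inr i))
    (fun i => X (Sum.inl i) - C Complex.I * X (Sum.inr i)))

/-- Coefficientwise real part of a complex polynomial. -/
noncomputable def reCoeff {n : ℕ} (q : CPoly n) : RPoly n :=
  ∑ e ∈ q.support, monomial e ((q.coeff e).re)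

/-- Coefficientwise imaginary part of a complex polynomial. -/
noncomputable def imCoeff {n : ℕ} (q : CPoly n) : RPoly n :=
  ∑ e ∈ q.support, monomial e ((q.coeff e).im)

/-- The real part `p_Re ∈ ℝ[x_Re,x_Im]` of `p ∈ ℂ[x,x̄]` under the change of
variables `x = x_Re + i·x_Im`. -/
noncomputable def pRe {n : ℕ} (p : CPoly n) : RPoly n := reCoeff (substReIm n p)

/-- The imaginary part `p_Im ∈ ℝ[x_Re,x_Im]` of `p ∈ ℂ[x,x̄]`. -/
noncomputable def pIm {n : ℕ} (p : CPoly n) : RPoly n := imCoeff (substReIm n p)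

/-- The real polynomial matrix `G^ℝ = [[G_Re, −G_Im],[G_Im, G_Re]]`
associated to `G ∈ ℂ[x,x̄]^{m×m}`. -/
noncomputable def GReal {n m : ℕ} (G : Matrix (Fin m) (Fin m) (CPoly n)) :
    Matrix (Fin m ⊕ Fin m) (Fin m ⊕ Fin m) (RPoly n) :=
  Matrix.fromBlocks
    (Matrix.of fun i j => pRe (G i j)) (Matrix.of fun i j => -pIm (G i j))
    (Matrix.of fun i j => pIm (G i j)) (Matrix.of fun i j => pRe (G i j))

/-!
The substitution `x = x_Re + i·x_Im` is a `ℂ`-algebra automorphism of `ℂ[x,x̄]` which turns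
`p ↦ p̄` into coefficientwise conjugation. Hence `p ↦ (p_Re, p_Im)` identifies `ℂ[x,x̄]` with
`ℝ[x_Re,x_Im] ⊕ i·ℝ[x_Re,x_Im]` as rings, conjugation becoming `(a, b) ↦ (a, -b)`.

Writing `U = U_Re + i·U_Im`, the product `U U*` has real part `U_Re U_Reᵀ + U_Im U_Imᵀ` and
imaginary part `U_Im U_Reᵀ - U_Re U_Imᵀ`, which are exactly the blocks of `U^ℝ (U^ℝ)ᵀ`.
Conversely, if `G^ℝ = V Vᵀ` with `V = [V₁; V₂]`, comparing blocks gives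
`G_Re = V₁V₁ᵀ = V₂V₂ᵀ` and `G_Im = V₂V₁ᵀ = -V₁V₂ᵀ`, so `U = (V₁ + i·V₂)/√2` has `U U* = G`.
-/

open scoped Matrix

theorem Matrix.exists_fin_of_eq_mul_transpose {ι κ R : Type*} [Fintype κ] [CommSemiring R]
    {M : Matrix ι ι R} {W : Matrix ι κ R} (h : M = W * Wᵀ) :
    ∃ (k : ℕ) (V : Matrix ι (Fin k) R), ∀ a b, M a b = ∑ s, V a s * V b s :=
  ⟨Fintype.card κ, W.submatrix id (Fintype.equivFin κ).symm, fun a b => by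
    rw [h, Matrix.mul_apply, ← (Fintype.equivFin κ).symm.sum_comp]
    rfl⟩

section

variable {n : ℕ}

theorem coeff_reCoeff (q : CPoly n) (e : Fin n ⊕ Fin n →₀ ℕ) :
    (reCoeff q).coeff e = (q.coeff e).re := by
  classical
  rw [reCoeff, coeff_sum]
  simp only [coeff_monomial, Finset.sum_ite_eq', mem_support_iff, ite_not]
  split_ifs with h <;> simp [h]

theorem coeff_imCoeff (q : CPoly n) (e : Fin n ⊕ Fin n →₀ ℕ) :
    (imCoeff q).coeff e = (q.coeff e).im := by
  classical
  rw [imCoeff, coeff_sum]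
  simp only [coeff_monomial, Finset.sum_ite_eq', mem_support_iff, ite_not]
  split_ifs with h <;> simp [h]

theorem reCoeff_map_add_I_mul (a b : RPoly n) :
    reCoeff (map (algebraMap ℝ ℂ) a + C Complex.I * map (algebraMap ℝ ℂ) b) = a := by
  ext e
  simp [coeff_reCoeff, coeff_map, coeff_C_mul]

theorem imCoeff_map_add_I_mul (a b : RPoly n) :
    imCoeff (map (algebraMap ℝ ℂ) a + C Complex.I * map (algebraMap ℝ ℂ) b) = b := by
  ext e
  simp [coeff_imCoeff, coeff_map, coeff_C_mul]

theorem map_reCoeff_add_I_mul_imCoeff (q : CPoly n) :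
    map (algebraMap ℝ ℂ) (reCoeff q) + C Complex.I * map (algebraMap ℝ ℂ) (imCoeff q) = q := by
  ext e
  simp [coeff_reCoeff, coeff_imCoeff, coeff_map, coeff_C_mul, Complex.ext_iff]

end

/-- Inverse of `substReIm`: `x_Re = (x + x̄)/2` and `x_Im = -i·(x - x̄)/2`. -/
noncomputable def substReImInv (n : ℕ) : CPoly n →ₐ[ℂ] CPoly n :=
  aeval (Sum.elim
    (fun i => C (1 / 2 : ℂ) * (X (Sum.inl i) + X (Sum.inr i)))
    (fun i => C (-Complex.I / 2) * (X (Sum.inl i) - X (Sum.inr i))))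

noncomputable def substReImEquiv (n : ℕ) : CPoly n ≃ₐ[ℂ] CPoly n := by
  refine AlgEquiv.ofAlgHom (substReIm n) (substReImInv n) ?_ ?_ <;>
  · refine algHom_ext fun v => ?_
    rcases v with i | i <;>
    · simp only [AlgHom.comp_apply, substReIm, substReImInv, aeval_X, Sum.elim_inl,
        Sum.elim_inr, map_add, map_sub, map_mul, aeval_C, algebraMap_eq, AlgHom.id_apply]
      simp only [C_mul', smul_add, smul_sub, smul_smul]
      match_scalars <;> ring_nf <;> norm_num [Complex.I_sq]

section

variable {n : ℕ}

@[simp]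
theorem substReImEquiv_apply (p : CPoly n) : substReImEquiv n p = substReIm n p := rfl

theorem substReIm_cconj (p : CPoly n) :
    substReIm n (cconj p) = map (starRingEnd ℂ) (substReIm n p) := by
  induction p using MvPolynomial.induction_on with
  | C a => simp [cconj, substReIm, algebraMap_eq]
  | add p q hp hq => simp_all [cconj]
  | mul_X p v hp =>
    rcases v with i | i <;> simp_all [cconj, substReIm, Complex.conj_I, sub_eq_add_neg]

noncomputable def ofReIm (a b : RPoly n) : CPoly n :=
  (substReImEquiv n).symm (map (algebraMap ℝ ℂ) a + C Complex.I * map (algebraMap ℝ ℂ) b)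

@[simp]
theorem pRe_ofReIm (a b : RPoly n) : pRe (ofReIm a b) = a := by
  rw [pRe, ofReIm, ← substReImEquiv_apply, AlgEquiv.apply_symm_apply, reCoeff_map_add_I_mul]

@[simp]
theorem pIm_ofReIm (a b : RPoly n) : pIm (ofReIm a b) = b := by
  rw [pIm, ofReIm, ← substReImEquiv_apply, AlgEquiv.apply_symm_apply, imCoeff_map_add_I_mul]

theorem ofReIm_pRe_pIm (p : CPoly n) : ofReIm (pRe p) (pIm p) = p := by
  rw [ofReIm, pRe, pIm, map_reCoeff_add_I_mul_imCoeff, AlgEquiv.symm_apply_eq]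
  rfl

theorem ofReIm_sum {ι : Type*} (s : Finset ι) (a b : ι → RPoly n) :
    ∑ i ∈ s, ofReIm (a i) (b i) = ofReIm (∑ i ∈ s, a i) (∑ i ∈ s, b i) := by
  simp only [ofReIm, map_sum, Finset.mul_sum, ← Finset.sum_add_distrib]

theorem ofReIm_mul (a b c d : RPoly n) :
    ofReIm a b * ofReIm c d = ofReIm (a * c - b * d) (a * d + b * c) := by
  have hI : (C Complex.I : CPoly n) * C Complex.I = -1 := by
    rw [← C_mul, Complex.I_mul_I, map_neg, map_one]
  rw [ofReIm, ofReIm, ofReIm, ← map_mul]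
  congr 1
  simp only [map_sub, map_add, map_mul]
  linear_combination map (algebraMap ℝ ℂ) b * map (algebraMap ℝ ℂ) d * hI

theorem cconj_ofReIm (a b : RPoly n) : cconj (ofReIm a b) = ofReIm a (-b) := by
  have hconj : (starRingEnd ℂ).comp (algebraMap ℝ ℂ) = algebraMap ℝ ℂ :=
    RingHom.ext Complex.conj_ofReal
  rw [ofReIm, ofReIm, AlgEquiv.eq_symm_apply, substReImEquiv_apply, substReIm_cconj,
    ← substReImEquiv_apply, AlgEquiv.apply_symm_apply]
  simp only [map_add, map_mul, map_neg, map_map, hconj, MvPolynomial.map_C, Complex.conj_I]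
  ring

theorem sum_ofReIm_mul_cconj {ι : Type*} (s : Finset ι) (a b c d : ι → RPoly n) :
    ∑ t ∈ s, ofReIm (a t) (b t) * cconj (ofReIm (c t) (d t)) =
      ofReIm (∑ t ∈ s, (a t * c t + b t * d t)) (∑ t ∈ s, (b t * c t - a t * d t)) := by
  simp only [cconj_ofReIm, ofReIm_mul, ofReIm_sum]
  congr 1 <;> refine Finset.sum_congr rfl fun t _ => by ring

theorem GReal_eq_mul_transpose {m k : ℕ} {G : Matrix (Fin m) (Fin m) (CPoly n)}
    {U : Matrix (Fin m) (Fin k) (CPoly n)} (hU : ∀ i j, G i j = ∑ s, U i s * cconj (U j s)) :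
    GReal G = Matrix.fromBlocks (U.map pRe) (-U.map pIm) (U.map pIm) (U.map pRe) *
      (Matrix.fromBlocks (U.map pRe) (-U.map pIm) (U.map pIm) (U.map pRe))ᵀ := by
  have hG : ∀ i j, G i j = ofReIm (∑ s, (pRe (U i s) * pRe (U j s) + pIm (U i s) * pIm (U j s)))
      (∑ s, (pIm (U i s) * pRe (U j s) - pRe (U i s) * pIm (U j s))) := fun i j => by
    rw [hU, ← sum_ofReIm_mul_cconj]
    simp only [ofReIm_pRe_pIm]
  rw [Matrix.fromBlocks_transpose, Matrix.fromBlocks_multiply]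
  refine Matrix.ext fun a b => ?_
  rcases a with i | i <;> rcases b with j | j <;>
    simp only [GReal, hG, pRe_ofReIm, pIm_ofReIm, Matrix.fromBlocks_apply₁₁,
      Matrix.fromBlocks_apply₁₂, Matrix.fromBlocks_apply₂₁, Matrix.fromBlocks_apply₂₂,
      Matrix.of_apply, Matrix.add_apply, Matrix.neg_apply, Matrix.mul_apply, Matrix.map_apply,
      Matrix.transpose_apply, Matrix.transpose_neg, Matrix.mul_neg, Matrix.neg_mul, neg_neg,
      Finset.sum_add_distrib, Finset.sum_sub_distrib] <;>
    ring

theorem eq_sum_mul_cconj_of_GReal_eq {m k : ℕ} {G : Matrix (Fin m) (Fin m) (CPoly n)}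
    {V : Matrix (Fin m ⊕ Fin m) (Fin k) (RPoly n)} (hV : ∀ a b, GReal G a b = ∑ s, V a s * V b s)
    (i j : Fin m) :
    G i j = ∑ s, ofReIm (C √2⁻¹ * V (.inl i) s) (C √2⁻¹ * V (.inr i) s) *
      cconj (ofReIm (C √2⁻¹ * V (.inl j) s) (C √2⁻¹ * V (.inr j) s)) := by
  have hc : (C √2⁻¹ : RPoly n) * C √2⁻¹ * 2 = 1 := by
    rw [← C_mul, ← map_ofNat C 2, ← C_mul, ← map_one C]
    congr 1
    field_simp
    simp
  have hRe₁ := hV (.inl i) (.inl j)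
  have hRe₂ := hV (.inr i) (.inr j)
  have hIm₁ := hV (.inr i) (.inl j)
  have hIm₂ := hV (.inl i) (.inr j)
  simp only [GReal, Matrix.fromBlocks_apply₁₁, Matrix.fromBlocks_apply₁₂, Matrix.fromBlocks_apply₂₁,
    Matrix.fromBlocks_apply₂₂, Matrix.of_apply] at hRe₁ hRe₂ hIm₁ hIm₂
  rw [sum_ofReIm_mul_cconj, ← ofReIm_pRe_pIm (G i j)]
  congr 1
  · calc pRe (G i j)
      _ = C √2⁻¹ * C √2⁻¹ * (∑ s, V (.inl i) s * V (.inl j) s +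
            ∑ s, V (.inr i) s * V (.inr j) s) := by
        rw [← hRe₁, ← hRe₂]
        linear_combination (-pRe (G i j)) * hc
      _ = _ := by
        rw [← Finset.sum_add_distrib, Finset.mul_sum]
        exact Finset.sum_congr rfl fun s _ => by ring
  · calc pIm (G i j)
      _ = C √2⁻¹ * C √2⁻¹ * (∑ s, V (.inr i) s * V (.inl j) s -
            ∑ s, V (.inl i) s * V (.inr j) s) := by
        rw [← hIm₁, ← hIm₂]
        linear_combination (-pIm (G i j)) * hc
      _ = _ := by
        rw [← Finset.sum_sub_distrib, Finset.mul_sum]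
        exact Finset.sum_congr rfl fun s _ => by ring

end

/-- `G` is a Hermitian SoS-polynomial matrix (`G = U U*`) iff
`G^ℝ` is a real SoS-polynomial matrix (`G^ℝ = V Vᵀ`). -/
theorem stmt19 {n m : ℕ} (G : Matrix (Fin m) (Fin m) (CPoly n)) :
    (∃ (k : ℕ) (U : Matrix (Fin m) (Fin k) (CPoly n)),
        ∀ i j, G i j = ∑ s, U i s * cconj (U j s)) ↔
    (∃ (k' : ℕ) (V : Matrix (Fin m ⊕ Fin m) (Fin k') (RPoly n)),
        ∀ a b, GReal G a b = ∑ s, V a s * V b s) := by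
  constructor
  · rintro ⟨k, U, hU⟩
    exact Matrix.exists_fin_of_eq_mul_transpose (GReal_eq_mul_transpose hU)
  · rintro ⟨k', V, hV⟩
    exact ⟨k', _, eq_sum_mul_cconj_of_GReal_eq hV⟩
end
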